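/- In U^−_q(gl(2|1)) (generated by even F_1 and odd F_2 subject to F_2^2 = 0 and the Serre relation F_1^2F_2 − [2]F_1F_2F_1 + F_2F_1^2 = 0), the set {F_1^{(r)}, F_1^{(r)}F_2, F_2F_1^{(r)}, F_2F_1^{(r+1)}F_2 : r ≥ 0} is a Q(q)-basis of U^−_q(gl(2|1)). -/

import Mathlib

set_option synthInstance.maxHeartbeats 1000000
set_option maxHeartbeats 1000000


namespace Stmt6
noncomputable section

abbrev K : Type := RatFunc ℚ
def qq : K := RatFunc.X
def qint (n : ℤ) : K := (qq ^ n - qq ^ (-n)) / (qq - qq⁻¹)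
def qfact (n : ℕ) : K := ∏ c ∈ Finset.range n, qint ((c : ℤ) + 1)

lemma qq_ne_zero : qq ≠ 0 := RatFunc.X_ne_zero

lemma qq_pow_ne_one (n : ℕ) (hn : n ≠ 0) : qq ^ n ≠ 1 := by
  intro h
  have hinj := IsFractionRing.injective (Polynomial ℚ) K
  have : (Polynomial.X : Polynomial ℚ) ^ n = 1 := by
    apply hinj
    simpa [map_pow, RatFunc.algebraMap_X, qq] using h
  have := congrArg Polynomial.natDegree this
  simp [Polynomial.natDegree_X_pow] at this
  exact hn this

lemma denom_ne : qq - qq⁻¹ ≠ 0 := by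
  intro h
  have h1 : qq = qq⁻¹ := sub_eq_zero.mp h
  have : qq ^ 2 = 1 := by
    rw [pow_two]; nth_rewrite 2 [h1]
    exact mul_inv_cancel₀ qq_ne_zero
  exact qq_pow_ne_one 2 (by norm_num) this

lemma qint_nat (n : ℕ) : qint n = (qq ^ n - (qq⁻¹) ^ n) / (qq - qq⁻¹) := by
  rw [qint, zpow_natCast, ← zpow_natCast qq⁻¹, inv_zpow, ← zpow_neg]

lemma qint_ne (n : ℕ) : qint (n + 1) ≠ 0 := by
  have h : qint ((n : ℤ) + 1) = (qq ^ (n+1) - (qq⁻¹) ^ (n+1)) / (qq - qq⁻¹) := by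
    have := qint_nat (n + 1)
    push_cast at this ⊢
    exact this
  rw [h, div_ne_zero_iff]
  refine ⟨?_, denom_ne⟩
  intro hc
  have h1 : qq ^ (n+1) = (qq⁻¹) ^ (n+1) := sub_eq_zero.mp hc
  have : qq ^ ((n+1) + (n+1)) = 1 := by
    rw [pow_add]
    nth_rewrite 2 [h1]
    rw [inv_pow, mul_inv_cancel₀ (pow_ne_zero _ qq_ne_zero)]
  exact qq_pow_ne_one _ (by omega) this

lemma qfact_succ (n : ℕ) : qfact (n + 1) = qfact n * qint (n + 1) := by
  rw [qfact, Finset.prod_range_succ, qfact]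

lemma qfact_ne (n : ℕ) : qfact n ≠ 0 := by
  induction n with
  | zero => simp [qfact]
  | succ n ih => rw [qfact_succ]; exact mul_ne_zero ih (qint_ne n)

lemma qint_zero : qint 0 = 0 := by simp [qint]
lemma qint_one : qint 1 = 1 := by
  rw [qint]; simp only [zpow_one, zpow_neg_one]
  exact div_self denom_ne

lemma qint_rec (n : ℕ) : qint n + qint (n + 2) = (qq + qq⁻¹) * qint (n + 1) := by
  have e : ∀ m : ℕ, qint (m : ℤ) * (qq - qq⁻¹) = qq ^ m - (qq⁻¹) ^ m := by
    intro m; rw [qint_nat, div_mul_cancel₀ _ denom_ne]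
  have h0 := e n
  have h1 := e (n + 1)
  have h2 := e (n + 2)
  push_cast at h0 h1 h2
  have hmul : qq * qq⁻¹ = 1 := mul_inv_cancel₀ qq_ne_zero
  apply mul_right_cancel₀ denom_ne
  rw [add_mul, h0, h2, mul_assoc, h1]
  linear_combination ((qq⁻¹) ^ n - qq ^ n) * hmul

abbrev FA : Type := FreeAlgebra K (Fin 2)
def G1 : FA := FreeAlgebra.ι K 0
def G2 : FA := FreeAlgebra.ι K 1

/-- Defining relations of U⁻_q(gl(2|1)). -/
inductive Rel : FA → FA → Prop
  | nil : Rel (G2 * G2) 0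
  | serre : Rel (G1 ^ 2 * G2 + G2 * G1 ^ 2) ((qq + qq⁻¹) • (G1 * G2 * G1))

/-- U⁻_q(gl(2|1)). -/
abbrev Um : Type := RingQuot Rel

def f1 : Um := RingQuot.mkAlgHom K Rel G1
def f2 : Um := RingQuot.mkAlgHom K Rel G2
def f1d (n : ℕ) : Um := (qfact n)⁻¹ • f1 ^ n

/-- The canonical basis set {F₁^{(r)}, F₁^{(r)}F₂, F₂F₁^{(r)}, F₂F₁^{(r+1)}F₂ : r ≥ 0}. -/
def S : Set Um :=
  {x | (∃ r : ℕ, x = f1d r) ∨ (∃ r : ℕ, x = f1d r * f2) ∨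
       (∃ r : ℕ, x = f2 * f1d r) ∨ (∃ r : ℕ, x = f2 * f1d (r + 1) * f2)}

inductive Bt : Type
  | A (r : ℕ) | B (r : ℕ) | C (r : ℕ) | D (r : ℕ)
deriving DecidableEq

abbrev W : Type := Bt →₀ K

def e (b : Bt) : W := Finsupp.single b 1

def Xf : Bt → W
  | .A r => qint (r + 1) • e (.A (r + 1))
  | .B r => qint (r + 1) • e (.B (r + 1))
  | .C r => e (.B (r + 2)) + qint (r + 1) • e (.C (r + 1))
  | .D r => qint (r + 1) • e (.D (r + 1))

def Yf : Bt → W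
  | .A 0 => e (.B 0)
  | .A (r + 1) => e (.C r)
  | .B 0 => 0
  | .B (r + 1) => e (.D r)
  | .C _ => 0
  | .D _ => 0

def Xl : Module.End K W := Finsupp.linearCombination K Xf
def Yl : Module.End K W := Finsupp.linearCombination K Yf


lemma Xl_s (b : Bt) (c : K) : Xl (Finsupp.single b c) = c • Xf b :=
  Finsupp.linearCombination_single ..
lemma Yl_s (b : Bt) (c : K) : Yl (Finsupp.single b c) = c • Yf b :=
  Finsupp.linearCombination_single ..

lemma YY : Yl * Yl = 0 := by
  apply Finsupp.lhom_ext
  intro b c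
  simp only [Module.End.mul_apply, LinearMap.zero_apply, Yl_s, map_smul]
  rcases b with r | r | r | r
  · rcases r with _ | r <;> simp [Yf, e, Yl_s]
  · rcases r with _ | r <;> simp [Yf, e, Yl_s]
  · simp [Yf]
  · simp [Yf]

lemma serreW : Xl * Xl * Yl + Yl * (Xl * Xl) = (qq + qq⁻¹) • (Xl * Yl * Xl) := by
  have h0 := qint_rec 0
  push_cast at h0
  rw [qint_zero, zero_add, qint_one, mul_one] at h0
  norm_num at h0
  apply Finsupp.lhom_ext
  intro b c
  simp only [LinearMap.add_apply, Module.End.mul_apply, LinearMap.smul_apply]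
  rcases b with r | r | r | r
  case A =>
    rcases r with _ | r
    · simp only [Xl_s, Yl_s, Xf, Yf, map_add, map_smul, smul_add, smul_smul, smul_zero,
        map_zero, mul_zero, zero_mul, mul_one, e, Finsupp.smul_single, smul_eq_mul]
      ext a
      rcases a with s | s | s | s <;>
        simp only [Finsupp.add_apply, Finsupp.coe_add, Pi.add_apply, Finsupp.single_apply,
          Bt.A.injEq, Bt.B.injEq, Bt.C.injEq, Bt.D.injEq, reduceCtorEq, if_false, smul_eq_mul,
          Finsupp.coe_zero, Pi.zero_apply, Finsupp.coe_smul] <;>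
        (try split_ifs)
      all_goals try push_cast
      all_goals try simp only [qint_one, one_mul, mul_one]
      all_goals try ring_nf
      all_goals try linear_combination (c : K) * h0
      all_goals try linear_combination (c : K) * qint 1 * h0
    · simp only [Xl_s, Yl_s, Xf, Yf, map_add, map_smul, smul_add, smul_smul, smul_zero,
        map_zero, mul_zero, zero_mul, mul_one, e, Finsupp.smul_single, smul_eq_mul]
      ext a
      have hr := qint_rec (r + 1)
      push_cast at hr; ring_nf at hr
      rcases a with s | s | s | s <;>
        simp only [Finsupp.add_apply, Finsupp.coe_add, Pi.add_apply, Finsupp.single_apply,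
          Bt.A.injEq, Bt.B.injEq, Bt.C.injEq, Bt.D.injEq, reduceCtorEq, if_false, smul_eq_mul,
          Finsupp.coe_zero, Pi.zero_apply, Finsupp.coe_smul] <;>
        (try split_ifs)
      all_goals try push_cast
      all_goals try simp only [qint_one, one_mul, mul_one]
      all_goals try ring_nf
      all_goals try linear_combination (c : K) * hr
      all_goals try linear_combination (c : K) * qint (1 + (r:ℤ)) * hr
      all_goals try linear_combination (c : K) * qint (2 + (r:ℤ)) * hr
      all_goals try linear_combination (c : K) * qint (3 + (r:ℤ)) * hr
  case B =>
    rcases r with _ | r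
    · simp only [Xl_s, Yl_s, Xf, Yf, map_add, map_smul, smul_add, smul_smul, smul_zero,
        map_zero, mul_zero, zero_mul, mul_one, e, Finsupp.smul_single, smul_eq_mul]
      ext a
      rcases a with s | s | s | s <;>
        simp only [Finsupp.add_apply, Finsupp.coe_add, Pi.add_apply, Finsupp.single_apply,
          Bt.A.injEq, Bt.B.injEq, Bt.C.injEq, Bt.D.injEq, reduceCtorEq, if_false, smul_eq_mul,
          Finsupp.coe_zero, Pi.zero_apply, Finsupp.coe_smul] <;>
        (try split_ifs)
      all_goals try push_cast
      all_goals try simp only [qint_one, one_mul, mul_one]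
      all_goals try ring_nf
      all_goals try linear_combination (c : K) * h0
      all_goals try linear_combination (c : K) * qint 1 * h0
    · simp only [Xl_s, Yl_s, Xf, Yf, map_add, map_smul, smul_add, smul_smul, smul_zero,
        map_zero, mul_zero, zero_mul, mul_one, e, Finsupp.smul_single, smul_eq_mul]
      ext a
      have hr := qint_rec (r + 1)
      push_cast at hr; ring_nf at hr
      rcases a with s | s | s | s <;>
        simp only [Finsupp.add_apply, Finsupp.coe_add, Pi.add_apply, Finsupp.single_apply,
          Bt.A.injEq, Bt.B.injEq, Bt.C.injEq, Bt.D.injEq, reduceCtorEq, if_false, smul_eq_mul,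
          Finsupp.coe_zero, Pi.zero_apply, Finsupp.coe_smul] <;>
        (try split_ifs)
      all_goals try push_cast
      all_goals try simp only [qint_one, one_mul, mul_one]
      all_goals try ring_nf
      all_goals try linear_combination (c : K) * hr
      all_goals try linear_combination (c : K) * qint (1 + (r:ℤ)) * hr
      all_goals try linear_combination (c : K) * qint (2 + (r:ℤ)) * hr
      all_goals try linear_combination (c : K) * qint (3 + (r:ℤ)) * hr
  case C =>
    simp only [Xl_s, Yl_s, Xf, Yf, map_add, map_smul, smul_add, smul_smul, smul_zero,
      map_zero, mul_zero, zero_mul, mul_one, e, Finsupp.smul_single, smul_eq_mul]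
    ext a
    have hr := qint_rec (r + 1)
    have hs := qint_rec (r + 2)
    push_cast at hr hs; ring_nf at hr hs
    rcases a with s | s | s | s <;>
      simp only [Finsupp.add_apply, Finsupp.coe_add, Pi.add_apply, Finsupp.single_apply,
        Bt.A.injEq, Bt.B.injEq, Bt.C.injEq, Bt.D.injEq, reduceCtorEq, if_false, smul_eq_mul,
        Finsupp.coe_zero, Pi.zero_apply, Finsupp.coe_smul] <;>
      (try split_ifs)
    all_goals try push_cast
    all_goals try simp only [qint_one, one_mul, mul_one]
    all_goals try ring_nf
    all_goals try linear_combination (c : K) * hr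
    all_goals try linear_combination (c : K) * hs
    all_goals try linear_combination (c : K) * qint (1 + (r:ℤ)) * hs
    all_goals try linear_combination (c : K) * qint (2 + (r:ℤ)) * hs
    all_goals try linear_combination (c : K) * qint (3 + (r:ℤ)) * hs
    all_goals try linear_combination (c : K) * qint (2 + (r:ℤ)) * hr
    all_goals try linear_combination (c : K) * qint (3 + (r:ℤ)) * hr
  case D =>
    simp only [Xl_s, Yl_s, Xf, Yf, map_add, map_smul, smul_add, smul_smul, smul_zero,
      map_zero, mul_zero, zero_mul, mul_one, e, Finsupp.smul_single, smul_eq_mul]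
    norm_num

def rho0 : FA →ₐ[K] Module.End K W := FreeAlgebra.lift K ![Xl, Yl]

lemma rho0_G1 : rho0 G1 = Xl := by simp [rho0, G1]
lemma rho0_G2 : rho0 G2 = Yl := by simp [rho0, G2]

lemma rho0_rel : ∀ ⦃a b : FA⦄, Rel a b → rho0 a = rho0 b := by
  rintro _ _ (_ | _)
  · rw [map_mul, map_zero, rho0_G2, YY]
  · rw [map_add, map_smul, map_mul, map_mul, map_mul, map_mul, map_pow, rho0_G1, rho0_G2]
    exact serreW

def rho : Um →ₐ[K] Module.End K W := RingQuot.liftAlgHom K ⟨rho0, rho0_rel⟩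

lemma rho_f1 : rho f1 = Xl := by
  rw [f1, rho, RingQuot.liftAlgHom_mkAlgHom_apply, rho0_G1]
lemma rho_f2 : rho f2 = Yl := by
  rw [f2, rho, RingQuot.liftAlgHom_mkAlgHom_apply, rho0_G2]

def ev : Um →ₗ[K] W := (LinearMap.applyₗ (e (Bt.A 0))).comp rho.toLinearMap

lemma ev_apply (u : Um) : ev u = rho u (e (Bt.A 0)) := rfl

lemma Xl_pow_A (n : ℕ) : (Xl ^ n) (e (Bt.A 0)) = qfact n • e (Bt.A n) := by
  induction n with
  | zero => simp [qfact]
  | succ n ih =>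
    rw [pow_succ', Module.End.mul_apply, ih, map_smul]
    rw [show Xl (e (Bt.A n)) = Xf (Bt.A n) by rw [e, Xl_s, one_smul], Xf, qfact_succ, smul_smul]

lemma Xl_pow_B (n : ℕ) : (Xl ^ n) (e (Bt.B 0)) = qfact n • e (Bt.B n) := by
  induction n with
  | zero => simp [qfact]
  | succ n ih =>
    rw [pow_succ', Module.End.mul_apply, ih, map_smul]
    rw [show Xl (e (Bt.B n)) = Xf (Bt.B n) by rw [e, Xl_s, one_smul], Xf, qfact_succ, smul_smul]

lemma rho_f1d_A (n : ℕ) : rho (f1d n) (e (Bt.A 0)) = e (Bt.A n) := by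
  rw [f1d, map_smul, map_pow, rho_f1, LinearMap.smul_apply, Xl_pow_A, smul_smul,
    inv_mul_cancel₀ (qfact_ne n), one_smul]

lemma rho_f1d_B (n : ℕ) : rho (f1d n) (e (Bt.B 0)) = e (Bt.B n) := by
  rw [f1d, map_smul, map_pow, rho_f1, LinearMap.smul_apply, Xl_pow_B, smul_smul,
    inv_mul_cancel₀ (qfact_ne n), one_smul]

lemma ev_f1d (n : ℕ) : ev (f1d n) = e (Bt.A n) := rho_f1d_A n

lemma ev_f1d_f2 (n : ℕ) : ev (f1d n * f2) = e (Bt.B n) := by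
  rw [ev_apply, map_mul, Module.End.mul_apply, rho_f2]
  rw [show Yl (e (Bt.A 0)) = Yf (Bt.A 0) by rw [e, Yl_s, one_smul]]
  exact rho_f1d_B n

lemma ev_f2_f1d (n : ℕ) : ev (f2 * f1d (n + 1)) = e (Bt.C n) := by
  rw [ev_apply, map_mul, Module.End.mul_apply, rho_f2, rho_f1d_A]
  rw [show Yl (e (Bt.A (n+1))) = Yf (Bt.A (n+1)) by rw [e, Yl_s, one_smul]]
  rfl

lemma ev_f2_f1d_f2 (n : ℕ) : ev (f2 * f1d (n + 1) * f2) = e (Bt.D n) := by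
  have h1 : Yl (e (Bt.A 0)) = e (Bt.B 0) := by rw [e, Yl_s, one_smul]; rfl
  have h2 : Yl (e (Bt.B (n+1))) = e (Bt.D n) := by rw [e, Yl_s, one_smul]; rfl
  rw [ev_apply, map_mul, map_mul, Module.End.mul_apply, Module.End.mul_apply, rho_f2, h1,
    rho_f1d_B, h2]

lemma f1d_zero : f1d 0 = 1 := by
  simp [f1d, qfact]

lemma f2f2 : f2 * f2 = 0 := by
  rw [f2, ← map_mul]
  rw [RingQuot.mkAlgHom_rel K Rel.nil, map_zero]

lemma serreUm : f1 ^ 2 * f2 + f2 * f1 ^ 2 = (qq + qq⁻¹) • (f1 * f2 * f1) := by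
  have := RingQuot.mkAlgHom_rel K Rel.serre
  rw [map_add, map_smul, map_mul, map_mul, map_mul, map_mul, map_pow] at this
  exact this

def canon : Bt → Um
  | .A r => f1d r
  | .B r => f1d r * f2
  | .C r => f2 * f1d (r + 1)
  | .D r => f2 * f1d (r + 1) * f2

lemma ev_canon (b : Bt) : ev (canon b) = e b := by
  cases b with
  | A r => exact ev_f1d r
  | B r => exact ev_f1d_f2 r
  | C r => exact ev_f2_f1d r
  | D r => exact ev_f2_f1d_f2 r

lemma mem_S_canon {x : Um} (hx : x ∈ S) : ∃ b : Bt, x = canon b := by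
  rcases hx with ⟨r, rfl⟩ | ⟨r, rfl⟩ | ⟨r, rfl⟩ | ⟨r, rfl⟩
  · exact ⟨Bt.A r, rfl⟩
  · exact ⟨Bt.B r, rfl⟩
  · rcases r with _ | r
    · refine ⟨Bt.B 0, ?_⟩
      show f2 * f1d 0 = f1d 0 * f2
      rw [f1d_zero, mul_one, one_mul]
    · exact ⟨Bt.C r, rfl⟩
  · exact ⟨Bt.D r, rfl⟩

lemma e_injective : Function.Injective e := by
  intro a b h
  by_contra hab
  have := congrArg (fun f => f a) h
  simp [e, Finsupp.single_apply, Ne.symm hab] at this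

lemma linind : LinearIndependent K ((↑) : S → Um) := by
  apply LinearIndependent.of_comp ev
  have hβ : ∀ s : S, ∃ b : Bt, (s : Um) = canon b := fun s => mem_S_canon s.2
  choose β hβ using hβ
  have hinj : Function.Injective β := by
    intro s t hst
    have : (s : Um) = (t : Um) := by rw [hβ s, hβ t, hst]
    exact Subtype.ext this
  have hcomp : (ev ∘ ((↑) : S → Um)) = fun s => e (β s) := by
    funext s
    simp only [Function.comp_apply]
    rw [hβ s, ev_canon]
  rw [hcomp]
  have hli : LinearIndependent K (fun b : Bt => e b) := by
    have := Finsupp.basisSingleOne (ι := Bt) (R := K) |>.linearIndependent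
    have hcoe : ⇑(Finsupp.basisSingleOne (ι := Bt) (R := K)) = fun b : Bt => e b := by
      funext b; rw [Finsupp.coe_basisSingleOne]; rfl
    rwa [hcoe] at this
  exact hli.comp β hinj

lemma Pn (n : ℕ) : qint (n + 1) • (f1 * (f2 * f1 ^ n)) =
    f1 ^ (n + 1) * f2 + qint n • (f2 * f1 ^ (n + 1)) := by
  induction n with
  | zero =>
    push_cast
    rw [qint_one, qint_zero]
    simp
  | succ n ih =>
    rw [Nat.cast_succ, show ((n:ℤ) + 1 + 1) = (n:ℤ) + 2 from by ring]
    have A := congrArg (fun z => f1 * z) ih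
    simp only [mul_add, mul_smul_comm] at A
    rw [show f1 * (f1 ^ (n+1) * f2) = f1 ^ (n + 1 + 1) * f2 by
      rw [← mul_assoc, ← pow_succ']] at A
    have B := congrArg (fun z => z * f1 ^ n) serreUm
    simp only [add_mul, smul_mul_assoc] at B
    rw [show f1 ^ 2 * f2 * f1 ^ n = f1 * (f1 * (f2 * f1 ^ n)) by
        rw [pow_two]; noncomm_ring,
      show f2 * f1 ^ 2 * f1 ^ n = f2 * f1 ^ (n + 1 + 1) by
        rw [mul_assoc, ← pow_add]; ring_nf,
      show f1 * f2 * f1 * f1 ^ n = f1 * (f2 * f1 ^ (n + 1)) by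
        rw [pow_succ']; noncomm_ring] at B
    have B' := congrArg (fun z => qint ((n : ℤ) + 1) • z) B
    simp only [smul_add, smul_smul] at B'
    rw [A] at B'
    rw [show qint ((n:ℤ) + 1) * (qq + qq⁻¹) = qint (n:ℤ) + qint ((n:ℤ) + 2) by
      have := qint_rec n; push_cast at this; linear_combination -this] at B'
    rw [add_smul] at B'
    calc qint ((n:ℤ) + 2) • (f1 * (f2 * f1 ^ (n + 1)))
        = (qint (n:ℤ) • (f1 * (f2 * f1 ^ (n + 1))) +
            qint ((n:ℤ) + 2) • (f1 * (f2 * f1 ^ (n + 1)))) -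
            qint (n:ℤ) • (f1 * (f2 * f1 ^ (n + 1))) := by abel
      _ = (f1 ^ (n + 1 + 1) * f2 + qint (n:ℤ) • (f1 * (f2 * f1 ^ (n + 1))) +
            qint ((n:ℤ) + 1) • (f2 * f1 ^ (n + 1 + 1))) -
            qint (n:ℤ) • (f1 * (f2 * f1 ^ (n + 1))) := by rw [← B']
      _ = f1 ^ (n + 1 + 1) * f2 + qint ((n:ℤ) + 1) • (f2 * f1 ^ (n + 1 + 1)) := by abel

lemma f1_mul_f1d (r : ℕ) : f1 * f1d r = qint (r + 1) • f1d (r + 1) := by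
  rw [f1d, f1d, mul_smul_comm, smul_smul, ← pow_succ', qfact_succ]
  congr 1
  rw [mul_inv, mul_comm, mul_assoc, inv_mul_cancel₀ (qint_ne r), mul_one]

lemma f1dP (r : ℕ) : f1 * (f2 * f1d r) = f1d (r + 1) * f2 + qint r • (f2 * f1d (r + 1)) := by
  have h := Pn r
  have s1 : (qfact (r + 1))⁻¹ * qint ((r : ℤ) + 1) = (qfact r)⁻¹ := by
    rw [qfact_succ, mul_inv, mul_assoc, inv_mul_cancel₀ (qint_ne r), mul_one]
  simp only [f1d, mul_smul_comm, smul_mul_assoc, smul_add, smul_smul]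
  calc (qfact r)⁻¹ • (f1 * (f2 * f1 ^ r))
      = ((qfact (r + 1))⁻¹ * qint ((r : ℤ) + 1)) • (f1 * (f2 * f1 ^ r)) := by rw [s1]
    _ = (qfact (r + 1))⁻¹ • (qint ((r : ℤ) + 1) • (f1 * (f2 * f1 ^ r))) := by
        rw [mul_smul]
    _ = (qfact (r + 1))⁻¹ • (f1 ^ (r + 1) * f2 + qint (r : ℤ) • (f2 * f1 ^ (r + 1))) := by
        rw [h]
    _ = (qfact (r + 1))⁻¹ • (f1 ^ (r + 1) * f2) +
          (qint (r : ℤ) * (qfact (r + 1))⁻¹) • (f2 * f1 ^ (r + 1)) := by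
        rw [smul_add, smul_smul, mul_comm]

lemma memS_f1d (r : ℕ) : f1d r ∈ S := Or.inl ⟨r, rfl⟩
lemma memS_f1d_f2 (r : ℕ) : f1d r * f2 ∈ S := Or.inr (Or.inl ⟨r, rfl⟩)
lemma memS_f2_f1d (r : ℕ) : f2 * f1d r ∈ S := Or.inr (Or.inr (Or.inl ⟨r, rfl⟩))
lemma memS_f2_f1d_f2 (r : ℕ) : f2 * f1d (r + 1) * f2 ∈ S := Or.inr (Or.inr (Or.inr ⟨r, rfl⟩))

lemma f1_mul_mem : ∀ x ∈ S, f1 * x ∈ Submodule.span K S := by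
  intro x hx
  rcases hx with ⟨r, rfl⟩ | ⟨r, rfl⟩ | ⟨r, rfl⟩ | ⟨r, rfl⟩
  · rw [f1_mul_f1d]
    exact Submodule.smul_mem _ _ (Submodule.subset_span (memS_f1d (r + 1)))
  · rw [← mul_assoc, f1_mul_f1d, smul_mul_assoc]
    exact Submodule.smul_mem _ _ (Submodule.subset_span (memS_f1d_f2 (r + 1)))
  · rw [f1dP]
    exact add_mem (Submodule.subset_span (memS_f1d_f2 (r + 1)))
      (Submodule.smul_mem _ _ (Submodule.subset_span (memS_f2_f1d (r + 1))))
  · rw [← mul_assoc, f1dP, add_mul, smul_mul_assoc, mul_assoc, f2f2, mul_zero, zero_add]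
    exact Submodule.smul_mem _ _ (Submodule.subset_span (memS_f2_f1d_f2 (r + 1)))

lemma f2_mul_mem : ∀ x ∈ S, f2 * x ∈ Submodule.span K S := by
  intro x hx
  rcases hx with ⟨r, rfl⟩ | ⟨r, rfl⟩ | ⟨r, rfl⟩ | ⟨r, rfl⟩
  · exact Submodule.subset_span (memS_f2_f1d r)
  · rcases r with _ | r
    · rw [f1d_zero, one_mul, f2f2]
      exact Submodule.zero_mem _
    · rw [← mul_assoc]
      exact Submodule.subset_span (memS_f2_f1d_f2 r)
  · rw [← mul_assoc, f2f2, zero_mul]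
    exact Submodule.zero_mem _
  · rw [show f2 * (f2 * f1d (r + 1) * f2) = f2 * f2 * (f1d (r + 1) * f2) by noncomm_ring,
      f2f2, zero_mul]
    exact Submodule.zero_mem _

def Q : Subalgebra K Um where
  carrier := {u | ∀ v ∈ Submodule.span K S, u * v ∈ Submodule.span K S}
  mul_mem' := by
    intro a b ha hb v hv
    rw [mul_assoc]
    exact ha _ (hb _ hv)
  add_mem' := by
    intro a b ha hb v hv
    rw [add_mul]
    exact add_mem (ha _ hv) (hb _ hv)
  one_mem' := by
    intro v hv
    rw [one_mul]
    exact hv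
  algebraMap_mem' := by
    intro c v hv
    rw [← Algebra.smul_def]
    exact Submodule.smul_mem _ _ hv

lemma f1_mem_Q : f1 ∈ Q := by
  intro v hv
  induction hv using Submodule.span_induction with
  | mem x hx => exact f1_mul_mem x hx
  | zero => rw [mul_zero]; exact Submodule.zero_mem _
  | add x y _ _ hx hy => rw [mul_add]; exact add_mem hx hy
  | smul c x _ hx => rw [mul_smul_comm]; exact Submodule.smul_mem _ _ hx

lemma f2_mem_Q : f2 ∈ Q := by
  intro v hv
  induction hv using Submodule.span_induction with
  | mem x hx => exact f2_mul_mem x hx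
  | zero => rw [mul_zero]; exact Submodule.zero_mem _
  | add x y _ _ hx hy => rw [mul_add]; exact add_mem hx hy
  | smul c x _ hx => rw [mul_smul_comm]; exact Submodule.smul_mem _ _ hx

lemma adjoin_top : Algebra.adjoin K ({f1, f2} : Set Um) = ⊤ := by
  have h1 : Algebra.adjoin K (Set.range (FreeAlgebra.ι K : Fin 2 → FA)) = ⊤ :=
    FreeAlgebra.adjoin_range_ι K (Fin 2)
  have hsur : Function.Surjective (RingQuot.mkAlgHom K Rel) :=
    RingQuot.mkAlgHom_surjective K Rel
  have h2 : Algebra.adjoin K ((RingQuot.mkAlgHom K Rel) ''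
      Set.range (FreeAlgebra.ι K : Fin 2 → FA)) = ⊤ := by
    rw [← AlgHom.map_adjoin, h1, Algebra.map_top, (AlgHom.range_eq_top _).mpr hsur]
  have h3 : (RingQuot.mkAlgHom K Rel) '' Set.range (FreeAlgebra.ι K : Fin 2 → FA) ⊆
      ({f1, f2} : Set Um) := by
    rintro x ⟨y, ⟨i, rfl⟩, rfl⟩
    fin_cases i
    · exact Or.inl rfl
    · exact Or.inr rfl
  exact top_le_iff.mp (h2 ▸ Algebra.adjoin_mono h3)

lemma span_top : Submodule.span K S = ⊤ := by
  rw [eq_top_iff]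
  intro u _
  have hQ : u ∈ Q := by
    have : Algebra.adjoin K ({f1, f2} : Set Um) ≤ Q := by
      rw [Algebra.adjoin_le_iff]
      rintro x (rfl | rfl)
      · exact f1_mem_Q
      · exact f2_mem_Q
    rw [adjoin_top] at this
    exact this trivial
  have h1 : (1 : Um) ∈ Submodule.span K S := by
    rw [← f1d_zero]
    exact Submodule.subset_span (memS_f1d 0)
  simpa using hQ 1 h1
/-- The set S is a ℚ(q)-basis of U⁻_q(gl(2|1)): linearly independent and spanning. -/
theorem stmt6 :
    LinearIndependent K ((↑) : S → Um) ∧ Submodule.span K S = ⊤ :=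
  ⟨linind, span_top⟩

end
end Stmt6
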